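/- If f is a homeomorphism of a compact metric space with the shadowing property, then for every ε>0 there is δ>0 with the following property: if x is a non-wandering point, y∈X, n>0 satisfy max{d(x,y), d(f^n(x),f^n(y))} < δ and γ := max{d(f^k(x),f^k(y)) : 0≤k<n} > ε, then there exist N≥1 and a compact set K ⊆ X with f^N(K)=K, sup_{k∈ℤ} diam(f^k(K)) ≤ 2γ, and f^N restricted to K semi-conjugate to the full shift on two symbols; in particular K is uncountable and the topological entropy of f on K is at least log(2)/N. -/

import Mathlib

open Filter Metric Set Topology

variable {X : Type*} [MetricSpace X]

/-- `f^k x` for `k : ℤ`, where `f` is a homeomorphism. -/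
def iterZ (f : X ≃ₜ X) (k : ℤ) (x : X) : X :=
  if 0 ≤ k then (⇑f)^[k.toNat] x else (⇑f.symm)^[(-k).toNat] x

/-- The classical shadowing property. -/
def Shadowing (f : X ≃ₜ X) : Prop :=
  ∀ ε > (0:ℝ), ∃ δ > (0:ℝ), ∀ x : ℤ → X,
    (∀ k : ℤ, dist (f (x k)) (x (k+1)) < δ) →
    ∃ z : X, ∀ k : ℤ, dist (iterZ f k z) (x k) < ε

/-- The L-shadowing property. -/
def LShadowing (f : X ≃ₜ X) : Prop :=
  ∀ ε > (0:ℝ), ∃ δ > (0:ℝ), ∀ x : ℤ → X,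
    (∀ k : ℤ, dist (f (x k)) (x (k+1)) ≤ δ) →
    Tendsto (fun k : ℤ => dist (f (x k)) (x (k+1))) cofinite (nhds 0) →
    ∃ z : X, (∀ k : ℤ, dist (iterZ f k z) (x k) ≤ ε) ∧
      Tendsto (fun k : ℤ => dist (iterZ f k z) (x k)) cofinite (nhds 0)

/-- The stable set of `x`. -/
def stableSet (f : X ≃ₜ X) (x : X) : Set X :=
  {y | Tendsto (fun n : ℕ => dist ((⇑f)^[n] x) ((⇑f)^[n] y)) atTop (nhds 0)}

/-- The unstable set of `x`. -/
def unstableSet (f : X ≃ₜ X) (x : X) : Set X := stableSet f.symm x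

/-- The local stable set of size `ε` of `x`. -/
def localStable (f : X ≃ₜ X) (ε : ℝ) (x : X) : Set X :=
  {y | ∀ n : ℕ, dist ((⇑f)^[n] x) ((⇑f)^[n] y) ≤ ε}

/-- The local unstable set of size `ε` of `x`. -/
def localUnstable (f : X ≃ₜ X) (ε : ℝ) (x : X) : Set X := localStable f.symm ε x

/-- `V^s_ε(x) = W^s(x) ∩ W^s_ε(x)`. -/
def Vs (f : X ≃ₜ X) (ε : ℝ) (x : X) : Set X := stableSet f x ∩ localStable f ε x

/-- `V^u_ε(x) = W^u(x) ∩ W^u_ε(x)`. -/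
def Vu (f : X ≃ₜ X) (ε : ℝ) (x : X) : Set X := unstableSet f x ∩ localUnstable f ε x

/-- The limit shadowing property. -/
def LimitShadowing (f : X ≃ₜ X) : Prop :=
  ∀ x : ℕ → X, Tendsto (fun k : ℕ => dist (f (x k)) (x (k+1))) atTop (nhds 0) →
    ∃ y : X, Tendsto (fun k : ℕ => dist ((⇑f)^[k] y) (x k)) atTop (nhds 0)

/-- The two-sided limit shadowing property. -/
def TwoSidedLimitShadowing (f : X ≃ₜ X) : Prop :=
  ∀ x : ℤ → X, Tendsto (fun k : ℤ => dist (f (x k)) (x (k+1))) cofinite (nhds 0) →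
    ∃ y : X, Tendsto (fun k : ℤ => dist (iterZ f k y) (x k)) cofinite (nhds 0)

/-- A non-wandering point. -/
def NonWandering (f : X ≃ₜ X) (x : X) : Prop :=
  ∀ U : Set X, IsOpen U → x ∈ U → ∃ k : ℕ, 0 < k ∧ ((⇑f)^[k] '' U ∩ U).Nonempty

/-- The non-wandering set. -/
def omegaSet (f : X ≃ₜ X) : Set X := {x | NonWandering f x}

/-- Topologically mixing. -/
def TopMixing (f : X ≃ₜ X) : Prop :=
  ∀ U V : Set X, IsOpen U → IsOpen V → U.Nonempty → V.Nonempty →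
    ∃ n : ℕ, 0 < n ∧ ∀ k ≥ n, ((⇑f)^[k] '' U ∩ V).Nonempty

/-- `f` is expansive on the set `A` (as a subsystem). -/
def ExpansiveOn (f : X ≃ₜ X) (A : Set X) : Prop :=
  ∃ c > (0:ℝ), ∀ x ∈ A, ∀ y ∈ A,
    (∀ k : ℤ, dist (iterZ f k x) (iterZ f k y) ≤ c) → x = y

/-- The dynamical ball `Γ_δ(x)`. -/
def dynBall (f : X ≃ₜ X) (δ : ℝ) (x : X) : Set X :=
  {y | ∀ k : ℤ, dist (iterZ f k x) (iterZ f k y) ≤ δ}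

/-- There is a periodic `ε`-pseudo-orbit containing both `x` and `y`. -/
def ChainRel (f : X ≃ₜ X) (ε : ℝ) (x y : X) : Prop :=
  ∃ (n : ℕ) (z : ℕ → X), 0 < n ∧ z 0 = x ∧ z n = x ∧ (∃ i ≤ n, z i = y) ∧
    ∀ i < n, dist (f (z i)) (z (i+1)) < ε

/-- The chain recurrent class of `x`. -/
def chainClass (f : X ≃ₜ X) (x : X) : Set X := {y | ∀ ε > (0:ℝ), ChainRel f ε x y}

/-- `h` is a semiconjugacy from `g` on `K` to the full shift on two symbols. -/
def SemiConjShift (g : X → X) (K : Set X) (h : X → (ℤ → Bool)) : Prop :=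
  ContinuousOn h K ∧ (∀ s : ℤ → Bool, ∃ p ∈ K, h p = s) ∧
    ∀ p ∈ K, h (g p) = fun i => h p (i + 1)

/-- `f` admits arbitrarily small topological semi-horseshoes inside `C`. -/
def SmallHorseshoes (f : X ≃ₜ X) (C : Set X) : Prop :=
  ∀ ε > (0:ℝ), ∃ N : ℕ, 1 ≤ N ∧ ∃ K : Set X, K ⊆ C ∧ IsCompact K ∧
    (⇑f)^[N] '' K = K ∧ (∀ k : ℤ, Metric.diam (iterZ f k '' K) ≤ ε) ∧
    ∃ h : X → (ℤ → Bool), SemiConjShift ((⇑f)^[N]) K h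

/-!
Since `x` is non-wandering, a point `z` follows the orbit of `x` for `n` steps and comes back
near `x` after `N > n` steps. The orbit segment of `z` of length `N`, and the same segment with its
first `n` points replaced by those of `y`, are two blocks that can be concatenated in any order
`s ∈ {0,1}^ℤ` into a `δ`-pseudo-orbit, which shadowing traces by a true orbit. The tracing points
form `K`. At a time `k₀ < n` where `γ` is attained the two blocks are more than `ε/2` apart, so
the symbol `s i` can be read off the orbit at time `i * N + k₀`: this is the semi-conjugacy, and
the `2 ^ M` words of length `M` give `2 ^ M` points of `K` that are `(M N)`-separated.
-/

lemma Homeomorph.coe_pow {Y : Type*} [TopologicalSpace Y] (f : Y ≃ₜ Y) (n : ℕ) :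
    ⇑(f ^ n) = (⇑f)^[n] := by
  induction n with
  | zero => rfl
  | succ n ih => rw [pow_succ', Function.iterate_succ', ← ih]; rfl

lemma iterZ_eq_zpow (f : X ≃ₜ X) (k : ℤ) : iterZ f k = ⇑(f ^ k) := by
  funext x
  cases k with
  | ofNat n => simp [iterZ, Homeomorph.coe_pow]
  | negSucc n =>
    rw [zpow_negSucc, ← inv_pow, Homeomorph.coe_pow]
    simp only [iterZ, Int.negSucc_not_nonneg, if_false, Int.neg_negSucc, Int.toNat_natCast]
    rfl

lemma iterZ_natCast (f : X ≃ₜ X) (n : ℕ) : iterZ f n = (⇑f)^[n] := by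
  rw [iterZ_eq_zpow, zpow_natCast, Homeomorph.coe_pow]

lemma iterZ_add (f : X ≃ₜ X) (k l : ℤ) (x : X) :
    iterZ f (k + l) x = iterZ f k (iterZ f l x) := by
  simp only [iterZ_eq_zpow, zpow_add, Homeomorph.mul_apply]

lemma continuous_iterZ (f : X ≃ₜ X) (k : ℤ) : Continuous (iterZ f k) := by
  rw [iterZ_eq_zpow]
  exact (f ^ k).continuous

lemma dist_lt_dist_of_two_mul_lt {Y : Type*} [PseudoMetricSpace Y] {w a b : Y} {ε : ℝ}
    (hw : dist w a ≤ ε) (hab : 2 * ε < dist a b) : dist w a < dist w b := by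
  linarith [dist_triangle_left a b w]

lemma continuousAt_decide_lt {Y R : Type*} [TopologicalSpace Y] [LinearOrder R]
    [TopologicalSpace R] [OrderClosedTopology R] {u v : Y → R} (hu : Continuous u)
    (hv : Continuous v) {y : Y} (hy : u y ≠ v y) :
    ContinuousAt (fun w => decide (u w < v w)) y := by
  rcases hy.lt_or_gt with h | h
  · exact continuousAt_const.congr <|
      ((isOpen_lt hu hv).eventually_mem h).mono fun w hw => (decide_eq_true hw).symm
  · exact continuousAt_const.congr <|
      ((isOpen_lt hv hu).eventually_mem h).mono fun w hw => (decide_eq_false hw.not_gt).symm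

lemma SemiConjShift.not_countable {g : X → X} {K : Set X} {h : X → ℤ → Bool}
    (hK : SemiConjShift g K h) : ¬ K.Countable := by
  have : Uncountable (ℤ → Bool) := by
    rw [← Cardinal.aleph0_lt_mk_iff]
    simpa using Cardinal.aleph0_lt_continuum
  refine fun hc => not_countable_univ ((hc.image h).mono fun s _ => ?_)
  obtain ⟨q, hq, rfl⟩ := hK.2.1 s
  exact ⟨q, hq, rfl⟩

section Entropy

open Dynamics Uniformity ENNReal

variable {Y : Type*} {T : Y → Y} {F : Set Y}

lemma isDynNetIn_of_pairwise_separated [PseudoMetricSpace Y] {s : Set Y} (hsF : s ⊆ F) {n : ℕ}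
    {r : ℝ} (hs : s.Pairwise fun u v => ∃ j < n, 2 * r ≤ dist (T^[j] u) (T^[j] v)) :
    IsDynNetIn T F {q | dist q.1 q.2 < r} n s := by
  refine ⟨hsF, fun u hu v hv huv => Set.disjoint_left.2 fun w hwu hwv => ?_⟩
  obtain ⟨j, hj, hsep⟩ := hs hu hv huv
  have hu' : dist (T^[j] u) (T^[j] w) < r := mem_dynEntourage.1 hwu j hj
  have hv' : dist (T^[j] v) (T^[j] w) < r := mem_dynEntourage.1 hwv j hj
  linarith [dist_triangle_right (T^[j] u) (T^[j] v) (T^[j] w)]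

lemma le_coverEntropy_of_dynNet_card [UniformSpace Y] {U : SetRel Y Y} (hU : U ∈ 𝓤 Y)
    {N b : ℕ} (hN : N ≠ 0) (hb : b ≠ 0)
    (h : ∀ M, ∃ t : Finset Y, IsDynNetIn T F U (N * M) t ∧ b ^ M ≤ t.card) :
    ((Real.log b / N : ℝ) : EReal) ≤ coverEntropy T F := by
  have hgrowth : ENNReal.log b ≤ N * netEntropyEntourage T F U := by
    have hmono : Monotone fun n => (netMaxcard T F U n : ℝ≥0∞) :=
      ENat.toENNReal_mono.comp (netMaxcard_monotone_time T F U)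
    rw [netEntropyEntourage, ← hmono.expGrowthSup_comp_mul hN, ← ExpGrowth.expGrowthSup_pow]
    refine ExpGrowth.expGrowthSup_monotone fun M => ?_
    obtain ⟨t, ht, hcard⟩ := h M
    refine le_trans ?_ (ENat.toENNReal_mono ht.card_le_netMaxcard)
    simp only [ENat.toENNReal_coe]
    exact_mod_cast hcard
  refine le_trans ?_ (netEntropyEntourage_le_coverEntropy T F hU)
  rw [EReal.coe_div, show ((N : ℝ) : EReal) = N from rfl,
    EReal.div_le_iff_le_mul (by exact_mod_cast Nat.pos_of_ne_zero hN) (EReal.natCast_ne_top N)]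
  rwa [← ENNReal.ofReal_natCast, ENNReal.log_ofReal, if_neg (by simpa only [Nat.cast_nonpos])]
    at hgrowth

end Entropy

lemma NonWandering.exists_return (f : X ≃ₜ X) {x : X} (hx : NonWandering f x) (n : ℕ)
    {δ : ℝ} (hδ : 0 < δ) :
    ∃ N > n, ∃ z : X, (∀ j ≤ n, dist ((⇑f)^[j] z) ((⇑f)^[j] x) < δ) ∧
      dist ((⇑f)^[N] z) x < δ := by
  by_cases hper : ∃ p ∈ Finset.Icc 1 n, Function.IsPeriodicPt f p x
  · obtain ⟨p, hp, hpx⟩ := hper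
    rw [Finset.mem_Icc] at hp
    refine ⟨p * (n + 1), by nlinarith, x, fun j _ => by simpa using hδ, ?_⟩
    rw [(hpx.mul_const (n + 1)).eq, dist_self]
    exact hδ
  push Not at hper
  -- No orbit starting `ρ`-close to `x` returns `ρ`-close to `x` within `n` steps.
  obtain ⟨ρ, ⟨hρx, hρδ⟩, hρ : 0 < ρ⟩ := (((Filter.eventually_all_finset _).2 fun j hj =>
      eventually_lt_nhds (half_pos (dist_pos.2 (hper j hj)))).and (eventually_lt_nhds hδ)
    |>.filter_mono nhdsWithin_le_nhds |>.and (self_mem_nhdsWithin (s := Ioi 0))).exists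
  set U : Set X := ⋂ j ∈ Iic n, (⇑f)^[j] ⁻¹' ball ((⇑f)^[j] x) ρ
  have hU : IsOpen U :=
    (finite_Iic n).isOpen_biInter fun j _ => isOpen_ball.preimage (f.continuous.iterate j)
  obtain ⟨N, hN, _, ⟨z, hz, rfl⟩, hNz⟩ := hx U hU (mem_iInter₂.2 fun j _ => mem_ball_self hρ)
  replace hz : ∀ j ≤ n, dist ((⇑f)^[j] z) ((⇑f)^[j] x) < ρ := fun j hj => mem_iInter₂.1 hz j hj
  have hNz₀ : dist ((⇑f)^[N] z) x < ρ := mem_iInter₂.1 hNz 0 (Nat.zero_le n)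
  refine ⟨N, ?_, z, fun j hj => (hz j hj).trans hρδ, hNz₀.trans hρδ⟩
  by_contra! hNn
  have := hρx N (Finset.mem_Icc.2 ⟨hN, hNn⟩)
  have := dist_triangle ((⇑f)^[N] x) ((⇑f)^[N] z) x
  linarith [dist_comm ((⇑f)^[N] x) ((⇑f)^[N] z), hz N hNn]

section Blocks

variable {α β : Type*}

def blockConcat (N : ℕ) (blk : β → ℕ → α) (s : ℤ → β) (k : ℤ) : α :=
  blk (s (k / N)) (k % N).toNat

variable {N : ℕ} {blk : β → ℕ → α}

lemma blockConcat_mul_add (s : ℤ → β) (i : ℤ) {j : ℕ} (hj : j < N) :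
    blockConcat N blk s (i * N + j) = blk (s i) j := by
  have hN : (N : ℤ) ≠ 0 := by omega
  have hj' : (j : ℤ) < N := by exact_mod_cast hj
  rw [blockConcat, add_comm, Int.add_mul_ediv_right _ _ hN, Int.add_mul_emod_self_right,
    Int.ediv_eq_zero_of_lt (by positivity) hj', Int.emod_eq_of_lt (by positivity) hj', zero_add,
    Int.toNat_natCast]

lemma blockConcat_add_length (hN : 0 < N) (s : ℤ → β) (k : ℤ) :
    blockConcat N blk s (k + N) = blockConcat N blk (fun i => s (i + 1)) k := by
  have hN' : (N : ℤ) ≠ 0 := by omega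
  rw [← one_mul (N : ℤ)]
  simp only [blockConcat, Int.add_mul_ediv_right _ _ hN', Int.add_mul_emod_self_right]

lemma continuous_blockConcat [TopologicalSpace α] [TopologicalSpace β] [DiscreteTopology β]
    (k : ℤ) : Continuous fun s => blockConcat N blk s k :=
  (continuous_of_discreteTopology (f := fun c => blk c (k % N).toNat)).comp
    (continuous_apply (k / N))

lemma dist_blockConcat_succ_lt [PseudoMetricSpace α] (g : α → α) (hN : 0 < N) {δ : ℝ}
    (hstep : ∀ c j, j + 1 < N → dist (g (blk c j)) (blk c (j + 1)) < δ)
    (hwrap : ∀ c c', dist (g (blk c (N - 1))) (blk c' 0) < δ) (s : ℤ → β) (k : ℤ) :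
    dist (g (blockConcat N blk s k)) (blockConcat N blk s (k + 1)) < δ := by
  obtain ⟨i, j, hjN, rfl⟩ : ∃ i : ℤ, ∃ j < N, k = i * N + j :=
    have := Int.emod_nonneg k (b := N) (by omega)
    have := Int.emod_lt_of_pos k (b := N) (by omega)
    have := Int.ediv_mul_add_emod k N
    ⟨k / N, (k % N).toNat, by omega, by omega⟩
  rw [blockConcat_mul_add s i hjN]
  rcases lt_or_eq_of_le (Nat.succ_le_of_lt hjN) with hj | hj
  · rw [add_assoc, ← Nat.cast_succ, blockConcat_mul_add s i hj]
    exact hstep _ _ hj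
  · have : i * N + j + 1 = (i + 1) * N + (0 : ℕ) := by
      have : (j : ℤ) + 1 = N := by exact_mod_cast hj
      push_cast; linear_combination this
    rw [this, blockConcat_mul_add s _ hN, show j = N - 1 by omega]
    exact hwrap _ _

end Blocks

section TwoBlocks

variable {α : Type*} (g : α → α) (n : ℕ) (y z : α)

def twoBlocks (c : Bool) (j : ℕ) : α :=
  if c ∧ j < n then g^[j] y else g^[j] z

variable {g n y z} [PseudoMetricSpace α] {x : α} {δ₁ : ℝ}

lemma dist_twoBlocks_le (hzx : ∀ j ≤ n, dist (g^[j] z) (g^[j] x) < δ₁) {C : ℝ} (hC₀ : 0 ≤ C)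
    (hC : ∀ j < n, dist (g^[j] x) (g^[j] y) ≤ C) (c c' : Bool) (j : ℕ) :
    dist (twoBlocks g n y z c j) (twoBlocks g n y z c' j) ≤ C + δ₁ := by
  have hδ₁ : 0 ≤ δ₁ := dist_nonneg.trans (hzx 0 (Nat.zero_le n)).le
  have hyz : ∀ j < n, dist (g^[j] y) (g^[j] z) ≤ C + δ₁ := fun j hj => by
    linarith [dist_triangle_left (g^[j] y) (g^[j] z) (g^[j] x), dist_comm (g^[j] x) (g^[j] z),
      hzx j hj.le, hC j hj]
  unfold twoBlocks
  split_ifs with h h' h'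
  · rw [dist_self]; positivity
  · exact hyz j h.2
  · rw [dist_comm]; exact hyz j h'.2
  · rw [dist_self]; positivity

lemma lt_dist_twoBlocks (hzx : ∀ j ≤ n, dist (g^[j] z) (g^[j] x) < δ₁) {j : ℕ} (hj : j < n) :
    dist (g^[j] x) (g^[j] y) - δ₁ <
      dist (twoBlocks g n y z true j) (twoBlocks g n y z false j) := by
  simp only [twoBlocks, hj, and_self, if_true, Bool.false_eq_true, false_and, if_false]
  linarith [dist_triangle_right (g^[j] x) (g^[j] y) (g^[j] z), dist_comm (g^[j] x) (g^[j] z),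
    hzx j hj.le]

lemma dist_blockConcat_twoBlocks_succ_lt {N : ℕ} (hn : 0 < n) (hnN : n < N)
    (hzx : ∀ j ≤ n, dist (g^[j] z) (g^[j] x) < δ₁) (hNzx : dist (g^[N] z) x < δ₁) {δ₂ : ℝ}
    (hxy : dist x y < δ₂) (hxyn : dist (g^[n] x) (g^[n] y) < δ₂) (hδ : δ₁ ≤ δ₂) (s : ℤ → Bool)
    (k : ℤ) :
    dist (g (blockConcat N (twoBlocks g n y z) s k)) (blockConcat N (twoBlocks g n y z) s (k + 1))
      < δ₁ + δ₂ := by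
  have hδ₁ : 0 < δ₁ := dist_nonneg.trans_lt (hzx 0 (Nat.zero_le n))
  refine dist_blockConcat_succ_lt g (by omega) (fun c j _ => ?_) (fun c c' => ?_) s k
  · unfold twoBlocks
    split_ifs with h h' h''
    · rw [← Function.iterate_succ_apply' g, dist_self]; linarith
    · have : j + 1 = n := by
        by_contra hj
        exact h' ⟨h.1, by omega⟩
      rw [← Function.iterate_succ_apply' g, Nat.succ_eq_add_one, this]
      linarith [dist_triangle_left (g^[n] y) (g^[n] z) (g^[n] x),
        dist_comm (g^[n] x) (g^[n] z), hzx n le_rfl]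
    · exact absurd ⟨h''.1, by omega⟩ h
    · rw [← Function.iterate_succ_apply' g, dist_self]; linarith
  · unfold twoBlocks
    rw [if_neg (by omega), ← Function.iterate_succ_apply' g, Nat.succ_eq_add_one,
      Nat.sub_add_cancel (by omega)]
    split_ifs <;> simp only [Function.iterate_zero_apply]
    · linarith [dist_triangle (g^[N] z) x y]
    · have hz₀ : dist z x < δ₁ := hzx 0 (Nat.zero_le n)
      linarith [dist_triangle (g^[N] z) x z, dist_comm x z]

end TwoBlocks

def Traces (f : X ≃ₜ X) (ε : ℝ) (z : X) (p : ℤ → X) : Prop :=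
  ∀ k, dist (iterZ f k z) (p k) ≤ ε

section Traces

variable {f : X ≃ₜ X} {ε : ℝ} {z : X} {p : ℤ → X}

lemma Traces.shift (h : Traces f ε z p) (m : ℤ) :
    Traces f ε (iterZ f m z) fun k => p (k + m) := fun k => by
  rw [← iterZ_add]
  exact h (k + m)

lemma Traces.iterate (h : Traces f ε z p) (N : ℕ) :
    Traces f ε ((⇑f)^[N] z) fun k => p (k + N) := by
  simpa only [iterZ_natCast] using h.shift N

end Traces

section ShadowSet

variable {σ : Type*}

def shadowSet (f : X ≃ₜ X) (ε : ℝ) (P : σ → ℤ → X) : Set X :=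
  {z | ∃ s, Traces f ε z (P s)}

variable {f : X ≃ₜ X} {ε : ℝ} {P : σ → ℤ → X}

lemma isCompact_shadowSet [CompactSpace X] [TopologicalSpace σ] [CompactSpace σ]
    (hP : ∀ k, Continuous fun s => P s k) : IsCompact (shadowSet f ε P) := by
  have hS : IsClosed (⋂ k, {q : X × σ | dist (iterZ f k q.1) (P q.2 k) ≤ ε}) :=
    isClosed_iInter fun k => isClosed_le (((continuous_iterZ f k).comp continuous_fst).dist
      ((hP k).comp continuous_snd)) continuous_const
  convert hS.isCompact.image continuous_fst
  ext z
  simp [shadowSet, Traces]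

lemma iterate_image_shadowSet {N : ℕ} {τ : σ → σ} (hτ : Function.Surjective τ)
    (hP : ∀ s k, P s (k + N) = P (τ s) k) :
    (⇑f)^[N] '' shadowSet f ε P = shadowSet f ε P := by
  refine Subset.antisymm ?_ fun z ⟨s, hz⟩ => ?_
  · rintro _ ⟨z, ⟨s, hz⟩, rfl⟩
    exact ⟨τ s, by simpa only [hP] using hz.iterate N⟩
  · obtain ⟨s', rfl⟩ := hτ s
    refine ⟨iterZ f (-N) z, ⟨s', ?_⟩, ?_⟩
    · simpa only [← hP, neg_add_cancel_right] using hz.shift (-N)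
    · rw [← iterZ_natCast, ← iterZ_add, add_neg_cancel, ← Nat.cast_zero, iterZ_natCast]
      rfl

lemma diam_iterZ_image_shadowSet_le {C : ℝ} (hε : 0 ≤ ε) (hC₀ : 0 ≤ C)
    (hC : ∀ s s' k, dist (P s k) (P s' k) ≤ C) (k : ℤ) :
    diam (iterZ f k '' shadowSet f ε P) ≤ 2 * ε + C := by
  refine diam_le_of_forall_dist_le (by positivity) ?_
  rintro _ ⟨z, ⟨s, hz⟩, rfl⟩ _ ⟨z', ⟨s', hz'⟩, rfl⟩
  linarith [dist_triangle4 (iterZ f k z) (P s k) (P s' k) (iterZ f k z'), hz k, hz' k,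
    hC s s' k, dist_comm (P s' k) (iterZ f k z')]

end ShadowSet

section ShadowCode

noncomputable def shadowCode (f : X ≃ₜ X) (N k₀ : ℕ) (p : Bool → X) (z : X) (i : ℤ) :
    Bool :=
  decide (dist (iterZ f (i * N + k₀) z) (p true) < dist (iterZ f (i * N + k₀) z) (p false))

variable {f : X ≃ₜ X} {ε : ℝ} {P : (ℤ → Bool) → ℤ → X} {N k₀ : ℕ} {p : Bool → X}

lemma Traces.dist_lt (hP : ∀ s i, P s (i * N + k₀) = p (s i))
    (hp : 2 * ε < dist (p true) (p false)) {z : X} {s : ℤ → Bool} (hz : Traces f ε z (P s))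
    (i : ℤ) :
    dist (iterZ f (i * N + k₀) z) (p (s i)) < dist (iterZ f (i * N + k₀) z) (p !(s i)) := by
  refine dist_lt_dist_of_two_mul_lt (hP s i ▸ hz (i * N + k₀)) ?_
  cases s i
  · rwa [dist_comm]
  · exact hp

lemma Traces.shadowCode_eq (hP : ∀ s i, P s (i * N + k₀) = p (s i))
    (hp : 2 * ε < dist (p true) (p false)) {z : X} {s : ℤ → Bool} (hz : Traces f ε z (P s)) :
    shadowCode f N k₀ p z = s := by
  funext i
  have := hz.dist_lt hP hp i
  unfold shadowCode
  cases h : s i <;> simp only [h, Bool.not_true, Bool.not_false] at this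
  · exact decide_eq_false this.not_gt
  · exact decide_eq_true this

lemma Traces.le_dist_of_ne (hP : ∀ s i, P s (i * N + k₀) = p (s i)) {z z' : X}
    {s s' : ℤ → Bool} (hz : Traces f ε z (P s)) (hz' : Traces f ε z' (P s')) {i : ℤ}
    (hi : s i ≠ s' i) :
    dist (p true) (p false) - 2 * ε ≤
      dist (iterZ f (i * N + k₀) z) (iterZ f (i * N + k₀) z') := by
  have hpp : dist (p (s i)) (p (s' i)) = dist (p true) (p false) := by
    cases h : s i <;> cases h' : s' i <;> simp_all [dist_comm]
  have := hz (i * N + k₀)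
  have := hz' (i * N + k₀)
  rw [hP] at *
  linarith [dist_triangle4 (p (s i)) (iterZ f (i * N + k₀) z) (iterZ f (i * N + k₀) z')
    (p (s' i)), dist_comm (p (s i)) (iterZ f (i * N + k₀) z)]

lemma semiConjShift_shadowCode (hP : ∀ s i, P s (i * N + k₀) = p (s i))
    (hp : 2 * ε < dist (p true) (p false))
    (hshift : ∀ s k, P s (k + N) = P (fun i => s (i + 1)) k)
    (hshadow : ∀ s, ∃ z, Traces f ε z (P s)) :
    SemiConjShift (⇑f)^[N] (shadowSet f ε P) (shadowCode f N k₀ p) := by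
  refine ⟨fun z ⟨s, hz⟩ => ?_, fun s => ?_, fun z ⟨s, hz⟩ => ?_⟩
  · have hdist (q : X) (i : ℤ) : Continuous fun w => dist (iterZ f (i * N + k₀) w) q :=
      (continuous_iterZ f _).dist continuous_const
    refine (continuousAt_pi.2 fun i => continuousAt_decide_lt (hdist _ i) (hdist _ i) ?_)
      |>.continuousWithinAt
    have := hz.dist_lt hP hp i
    cases h : s i <;> simp only [h, Bool.not_true, Bool.not_false] at this
    exacts [this.ne', this.ne]
  · obtain ⟨z, hz⟩ := hshadow s
    exact ⟨z, ⟨s, hz⟩, hz.shadowCode_eq hP hp⟩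
  · have hNz : Traces f ε ((⇑f)^[N] z) (P fun i => s (i + 1)) := by
      simpa only [hshift] using hz.iterate N
    rw [hNz.shadowCode_eq hP hp, hz.shadowCode_eq hP hp]

open Dynamics in
lemma log_two_div_le_coverEntropy_shadowSet (hk₀ : k₀ < N)
    (hP : ∀ s i, P s (i * N + k₀) = p (s i)) (hp : 2 * ε < dist (p true) (p false))
    (hshadow : ∀ s, ∃ z, Traces f ε z (P s)) :
    ((Real.log 2 / N : ℝ) : EReal) ≤ coverEntropy (⇑f) (shadowSet f ε P) := by
  set r := (dist (p true) (p false) - 2 * ε) / 2 with hr_def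
  have hr : 0 < r := by linarith
  refine le_coverEntropy_of_dynNet_card (dist_mem_uniformity hr) (by omega) two_ne_zero
    fun M => ?_
  choose ζ hζ using fun w : Fin M → Bool =>
    hshadow fun k => if h : k.toNat < M then w ⟨k.toNat, h⟩ else false
  have hsep : ∀ w w', w ≠ w' →
      ∃ j < N * M, 2 * r ≤ dist ((⇑f)^[j] (ζ w)) ((⇑f)^[j] (ζ w')) := by
    intro w w' hww'
    obtain ⟨i, hi⟩ := Function.ne_iff.1 hww'
    refine ⟨i * N + k₀, by nlinarith [i.2], ?_⟩
    have := (hζ w).le_dist_of_ne hP (hζ w') (i := (i : ℕ)) (by simpa using hi)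
    rw [← iterZ_natCast, Nat.cast_add, Nat.cast_mul]
    linarith
  have hinj : Function.Injective ζ := fun w w' h => by
    by_contra hww'
    obtain ⟨j, -, hj⟩ := hsep w w' hww'
    rw [h, dist_self] at hj
    linarith
  refine ⟨Finset.univ.map ⟨ζ, hinj⟩, isDynNetIn_of_pairwise_separated ?_ ?_, by simp⟩
  · intro u hu
    obtain ⟨w, -, rfl⟩ := Finset.mem_map.1 hu
    exact ⟨_, hζ w⟩
  · intro u hu v hv hne
    obtain ⟨w, -, rfl⟩ := Finset.mem_map.1 hu
    obtain ⟨w', -, rfl⟩ := Finset.mem_map.1 hv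
    exact hsep w w' fun h => hne (h ▸ rfl)

end ShadowCode

open Dynamics in
theorem exists_semiHorseshoe_of_blocks [CompactSpace X] (f : X ≃ₜ X) {N k₀ : ℕ}
    {blk : Bool → ℕ → X} {ε C : ℝ} (hk₀ : k₀ < N)
    (hsep : 2 * ε < dist (blk true k₀) (blk false k₀))
    (hC : ∀ c c' j, dist (blk c j) (blk c' j) ≤ C)
    (htrace : ∀ s, ∃ z, Traces f ε z (blockConcat N blk s)) :
    ∃ K : Set X, IsCompact K ∧ (⇑f)^[N] '' K = K ∧
      (∀ k : ℤ, diam (iterZ f k '' K) ≤ 2 * ε + C) ∧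
      (∃ h : X → (ℤ → Bool), SemiConjShift ((⇑f)^[N]) K h) ∧
      ((Real.log 2 / N : ℝ) : EReal) ≤ coverEntropy (⇑f) K := by
  have hN : 0 < N := by omega
  have hP : ∀ s i, blockConcat N blk s (i * N + k₀) = blk (s i) k₀ := fun s i =>
    blockConcat_mul_add s i hk₀
  have hε : 0 ≤ ε := by
    obtain ⟨z, hz⟩ := htrace fun _ => false
    exact dist_nonneg.trans (hz 0)
  refine ⟨shadowSet f ε (blockConcat N blk), isCompact_shadowSet continuous_blockConcat,
    iterate_image_shadowSet (fun s => ⟨fun i => s (i - 1), by simp⟩) (blockConcat_add_length hN),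
    diam_iterZ_image_shadowSet_le hε (dist_nonneg.trans (hC true true 0)) fun _ _ _ => hC _ _ _,
    ⟨_, semiConjShift_shadowCode (p := (blk · k₀)) hP hsep (blockConcat_add_length hN) htrace⟩,
    log_two_div_le_coverEntropy_shadowSet (p := (blk · k₀)) hk₀ hP hsep htrace⟩

/-- creation of topological semi-horseshoes from the shadowing
property. -/
theorem horseshoe_of_shadowing [CompactSpace X] (f : X ≃ₜ X) (hsh : Shadowing f) :
    ∀ ε > (0:ℝ), ∃ δ > (0:ℝ), ∀ (x y : X) (n : ℕ) (γ : ℝ),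
      NonWandering f x → 0 < n →
      IsGreatest {d : ℝ | ∃ k < n, d = dist ((⇑f)^[k] x) ((⇑f)^[k] y)} γ →
      ε < γ → dist x y < δ → dist ((⇑f)^[n] x) ((⇑f)^[n] y) < δ →
      ∃ N : ℕ, 1 ≤ N ∧ ∃ K : Set X, IsCompact K ∧ (⇑f)^[N] '' K = K ∧
        (∀ k : ℤ, Metric.diam (iterZ f k '' K) ≤ 2 * γ) ∧
        (∃ h : X → (ℤ → Bool), SemiConjShift ((⇑f)^[N]) K h) ∧
        ¬ K.Countable ∧
        ((Real.log 2 / N : ℝ) : EReal) ≤ Dynamics.coverEntropy (⇑f) K := by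
  intro ε hε
  obtain ⟨δ₀, hδ₀, hshadow⟩ := hsh (ε / 4) (by positivity)
  refine ⟨δ₀ / 2, by positivity, fun x y n γ hx hn hγ hεγ hxy hxyn => ?_⟩
  obtain ⟨⟨k₀, hk₀n, hk₀⟩, hγ⟩ := hγ
  -- `δ₁ ≤ δ₀ / 2` makes the concatenated blocks `δ₀`-pseudo-orbits; `δ₁ ≤ ε / 8` keeps them
  -- more than `ε / 2` apart at time `k₀` and the diameter bound below `2 * γ`.
  set δ₁ := min (ε / 8) (δ₀ / 2)
  have hδ₁ε : δ₁ ≤ ε / 8 := min_le_left _ _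
  have hδ₁δ₀ : δ₁ ≤ δ₀ / 2 := min_le_right _ _
  obtain ⟨N, hnN, z, hzx, hNzx⟩ := hx.exists_return f n (by positivity : 0 < δ₁)
  have htrace : ∀ s, ∃ w, Traces f (ε / 4) w (blockConcat N (twoBlocks f n y z) s) := fun s =>
    (hshadow _ fun k => (dist_blockConcat_twoBlocks_succ_lt hn hnN hzx hNzx hxy hxyn hδ₁δ₀ s k
      ).trans_le (by linarith)).imp fun w hw k => (hw k).le
  have hsep := lt_dist_twoBlocks (y := y) hzx hk₀n
  have hC := dist_twoBlocks_le hzx (hε.le.trans hεγ.le) fun j hj => hγ ⟨j, hj, rfl⟩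
  obtain ⟨K, hK, hKinv, hdiam, ⟨h, hconj⟩, hent⟩ :=
    exists_semiHorseshoe_of_blocks f (hk₀n.trans hnN) (by linarith) hC htrace
  exact ⟨N, by omega, K, hK, hKinv, fun k => (hdiam k).trans (by linarith), ⟨h, hconj⟩,
    hconj.not_countable, hent⟩
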